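/- arXiv:1711.03876 — 7 statements merged into one kernel-verified Lean document; each statement's English description precedes it below -/
import Mathlib

section
/- Let (T, <) be a linear order, P ⊆ T, t ∈ T. Suppose there exists a gap g (a downward-closed nonempty proper subset with no maximum and whose supremum does not exist) such that t ∈ g, P holds at every point of the interval (t, g) = {a | a > t ∧ a ∈ g}, the interval (t,g) is nonempty, and for every t₁ ∉ g there exists t' with t' ∈ (g, t₁) (i.e., t' ∉ g, t' < t₁) and t' ∉ P. Then (1) (P Until P) ∧ ¬(P Until ¬P) holds at t, (2) ¬□P holds at t, and (3) ¬(P Until (P ∧ K⁺(¬P))) holds at t. -/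
def Until {T : Type*} [LinearOrder T] (A B : Set T) (t : T) : Prop :=
  ∃ t', t < t' ∧ t' ∈ B ∧ ∀ y, t < y → y < t' → y ∈ A

def Box {T : Type*} [LinearOrder T] (P : Set T) (t : T) : Prop :=
  ∀ t', t < t' → t' ∈ P

def Kplus {T : Type*} [LinearOrder T] (P : Set T) (t : T) : Prop :=
  ∀ t', t < t' → ∃ y, t < y ∧ y < t' ∧ y ∈ P

/-- A gap: a nonempty downward-closed proper subset with no greatest element
whose complement has no least element. -/
def IsGap {T : Type*} [LinearOrder T] (g : Set T) : Prop :=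
  g.Nonempty ∧ gᶜ.Nonempty ∧ (∀ a b : T, a ≤ b → b ∈ g → a ∈ g) ∧
    (∀ a ∈ g, ∃ b ∈ g, a < b) ∧ (∀ a ∉ g, ∃ b ∉ g, b < a)

theorem stmt_6 {T : Type*} [LinearOrder T] (P : Set T) (t : T) (g : Set T)
    (hg : IsGap g) (htg : t ∈ g)
    (hne : ∃ a, t < a ∧ a ∈ g)
    (hP : ∀ a, t < a → a ∈ g → a ∈ P)
    (hcl : ∀ t₁ ∉ g, ∃ t', t' ∉ g ∧ t' < t₁ ∧ t' ∉ P) :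
    (Until P P t ∧ ¬ Until P Pᶜ t) ∧
      ¬ Box P t ∧
      ¬ Until P (P ∩ {x | Kplus Pᶜ x}) t := by
  obtain ⟨-, ⟨b0, hb0⟩, hdc, hnomax, hnomin⟩ := hg
  have hgt : ∀ x, x ∉ g → t < x := by
    intro x hx
    by_contra h
    exact hx (hdc x t (le_of_not_gt h) htg)
  refine ⟨⟨?_, ?_⟩, ?_, ?_⟩
  · obtain ⟨a, hta, hag⟩ := hne
    exact ⟨a, hta, hP a hta hag, fun y hy hy' => hP y hy (hdc y a hy'.le hag)⟩
  · rintro ⟨t', htt', ht'P, hall⟩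
    have ht'g : t' ∉ g := fun h => ht'P (hP t' htt' h)
    obtain ⟨s, hsg, hst', hsP⟩ := hcl t' ht'g
    exact hsP (hall s (hgt s hsg) hst')
  · intro hbox
    obtain ⟨s, hsg, -, hsP⟩ := hcl b0 hb0
    exact hsP (hbox s (hgt s hsg))
  · rintro ⟨t', htt', ⟨ht'P, hK⟩, hall⟩
    by_cases ht'g : t' ∈ g
    · obtain ⟨b, hbg, ht'b⟩ := hnomax t' ht'g
      obtain ⟨y, h1, h2, h3⟩ := hK b ht'b
      exact h3 (hP y (htt'.trans h1) (hdc y b h2.le hbg))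
    · obtain ⟨s, hsg, hst', hsP⟩ := hcl t' ht'g
      exact hsP (hall s (hgt s hsg) hst')
end

section
/- Conversely, let (T, <) be a linear order, P ⊆ T, t ∈ T, and suppose: (1) (P Until P) ∧ ¬(P Until ¬P) holds at t, (2) ¬□P holds at t, and (3) ¬(P Until (P ∧ K⁺(¬P))) holds at t. Then there exists a gap g with t ∈ g such that P holds everywhere on (t, g), (t,g) is nonempty, and for every t₁ ∉ g there is t' ∉ g with t' < t₁ and t' ∉ P. -/
theorem stmt_7 {T : Type*} [LinearOrder T] (P : Set T) (t : T)
    (h1 : Until P P t ∧ ¬ Until P Pᶜ t)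
    (h2 : ¬ Box P t)
    (h3 : ¬ Until P (P ∩ {x | Kplus Pᶜ x}) t) :
    ∃ g : Set T, IsGap g ∧ t ∈ g ∧
      (∃ a, t < a ∧ a ∈ g) ∧
      (∀ a, t < a → a ∈ g → a ∈ P) ∧
      (∀ t₁ ∉ g, ∃ t', t' ∉ g ∧ t' < t₁ ∧ t' ∉ P) := by
  obtain ⟨hU, hNU⟩ := h1
  set g : Set T := {x | ∀ y, t < y → y ≤ x → y ∈ P} with hg
  -- key : below any non-P point above t there is another non-P point above t
  have key : ∀ c, t < c → c ∉ P → ∃ z, t < z ∧ z < c ∧ z ∉ P := by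
    intro c htc hcP
    by_contra h
    push_neg at h
    exact hNU ⟨c, htc, hcP, fun y hy1 hy2 => h y hy1 hy2⟩
  have htg : t ∈ g := fun y hy hle => absurd (lt_of_lt_of_le hy hle) (lt_irrefl t)
  obtain ⟨t', htt', ht'P, ht'seg⟩ := hU
  have ht'g : t' ∈ g := by
    intro y hy hle
    rcases lt_or_eq_of_le hle with h | h
    · exact ht'seg y hy h
    · exact h ▸ ht'P
  have hPg : ∀ a, t < a → a ∈ g → a ∈ P := fun a ha hag => hag a ha le_rfl
  -- the main lemma for non-members
  have hlast : ∀ a, a ∉ g → ∃ z, t < z ∧ z < a ∧ z ∉ P := by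
    intro a hag
    have : ∃ y, t < y ∧ y ≤ a ∧ y ∉ P := by
      by_contra h
      push_neg at h
      exact hag (fun y h1 h2 => h y h1 h2)
    obtain ⟨y, hty, hya, hyP⟩ := this
    rcases lt_or_eq_of_le hya with h | h
    · exact ⟨y, hty, h, hyP⟩
    · subst h
      exact key y hty hyP
  have hnotg_of : ∀ z, t < z → z ∉ P → z ∉ g := fun z h1 h2 hzg => h2 (hzg z h1 le_rfl)
  refine ⟨g, ⟨⟨t, htg⟩, ?_, ?_, ?_, ?_⟩, htg, ⟨t', htt', ht'g⟩, hPg, ?_⟩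
  · -- complement nonempty
    have : ∃ s, t < s ∧ s ∉ P := by
      by_contra h
      push_neg at h
      exact h2 h
    obtain ⟨s, hts, hsP⟩ := this
    exact ⟨s, hnotg_of s hts hsP⟩
  · -- downward closed
    intro a b hab hb y hy hle
    exact hb y hy (hle.trans hab)
  · -- no greatest element
    intro a ha
    by_cases hat : a ≤ t
    · exact ⟨t', ht'g, lt_of_le_of_lt hat htt'⟩
    push_neg at hat
    by_contra h
    push_neg at h
    -- every c > a is not in g
    have hout : ∀ c, a < c → c ∉ g := fun c hac hcg =>
      absurd hac (not_lt_of_ge (h c hcg))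
    apply h3
    refine ⟨a, hat, ⟨hPg a hat ha, ?_⟩, fun y h1 h2 => ha y h1 h2.le⟩
    -- Kplus Pᶜ a
    intro c hac
    obtain ⟨z, htz, hzc, hzP⟩ := hlast c (hout c hac)
    have haz : a < z := by
      by_contra hza
      push_neg at hza
      exact hzP (ha z htz hza)
    exact ⟨z, haz, hzc, hzP⟩
  · -- complement has no least element
    intro a hag
    obtain ⟨z, htz, hza, hzP⟩ := hlast a hag
    exact ⟨z, hnotg_of z htz hzP, hza⟩
  · -- final condition
    intro a hag
    obtain ⟨z, htz, hza, hzP⟩ := hlast a hag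
    exact ⟨z, hnotg_of z htz hzP, hza, hzP⟩
end

section
/- In a Dedekind-complete linear order, the modality γ⁺(P) is unsatisfiable: for every t and every P ⊆ T, there is no gap g > t such that P holds on the nonempty interval (t,g) and ¬P occurs arbitrarily close above g. Equivalently, in a Dedekind-complete linear order, the conjunction (P Until P) ∧ ¬(P Until ¬P) ∧ ¬□P ∧ ¬(P Until (P ∧ K⁺(¬P))) never holds at any point. -/
theorem stmt_8 {T : Type*} [LinearOrder T]
    (hcomplete : ∀ S : Set T, S.Nonempty → (∃ b : T, ∀ x ∈ S, x ≤ b) →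
      ∃ s : T, IsLUB S s) :
    (∀ (t : T) (P : Set T),
      ¬ ∃ g : Set T, IsGap g ∧ t ∈ g ∧
        (∃ a, t < a ∧ a ∈ g) ∧
        (∀ a, t < a → a ∈ g → a ∈ P) ∧
        (∀ t₁ ∉ g, ∃ t', t' ∉ g ∧ t' < t₁ ∧ t' ∉ P)) ∧
    (∀ (t : T) (P : Set T),
      ¬ (Until P P t ∧ ¬ Until P Pᶜ t ∧ ¬ Box P t ∧
          ¬ Until P (P ∩ {x | Kplus Pᶜ x}) t)) := by
  constructor
  · rintro t P ⟨g, ⟨⟨x, hx⟩, ⟨c, hc⟩, hdc, hng, hnl⟩, -⟩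
    have hub : ∀ z, z ∉ g → ∀ y ∈ g, y ≤ z := by
      intro z hz y hy
      by_contra h
      exact hz (hdc z y (le_of_lt (not_le.mp h)) hy)
    obtain ⟨s, hs⟩ := hcomplete g ⟨x, hx⟩ ⟨c, hub c hc⟩
    by_cases hsg : s ∈ g
    · obtain ⟨b, hb, hsb⟩ := hng s hsg
      exact absurd (hs.1 hb) (not_le.mpr hsb)
    · obtain ⟨b, hb, hbs⟩ := hnl s hsg
      exact absurd (hs.2 (hub b hb)) (not_le.mpr hbs)
  · rintro t P ⟨⟨t', ht', ht'P, hint⟩, hnU, hnB, hnK⟩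
    simp only [Box, not_forall] at hnB
    obtain ⟨u, htu, huP⟩ := hnB
    -- N : points above t not in P
    set N : Set T := {n | t < n ∧ n ∉ P} with hN
    -- S' : lower bounds of N
    set S' : Set T := {x | ∀ n ∈ N, x ≤ n} with hS'
    have htS' : t ∈ S' := fun n hn => le_of_lt hn.1
    have ht'S' : t' ∈ S' := by
      intro n hn
      by_contra h
      push_neg at h
      rcases lt_or_eq_of_le (le_of_lt h) with h' | h'
      · exact hn.2 (hint n hn.1 h')
      · exact hn.2 (h' ▸ ht'P)
    have hbdd : ∀ x ∈ S', x ≤ u := fun x hx => hx u ⟨htu, huP⟩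
    obtain ⟨s, hs⟩ := hcomplete S' ⟨t, htS'⟩ ⟨u, hbdd⟩
    have hts : t < s := lt_of_lt_of_le ht' (hs.1 ht'S')
    -- P holds on (t, s)
    have hPint : ∀ y, t < y → y < s → y ∈ P := by
      intro y hty hys
      by_contra hyP
      have : s ≤ y := hs.2 (fun x hx => hx y ⟨hty, hyP⟩)
      exact absurd hys (not_lt.mpr this)
    -- s ∈ P
    have hsP : s ∈ P := by
      by_contra hsP
      exact hnU ⟨s, hts, hsP, hPint⟩
    -- Kplus Pᶜ s
    have hK : Kplus Pᶜ s := by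
      intro t'' hst''
      have : t'' ∉ S' := fun h => absurd (hs.1 h) (not_le.mpr hst'')
      simp only [hS', Set.mem_setOf_eq, not_forall] at this
      obtain ⟨n, hn, hnt''⟩ := this
      push_neg at hnt''
      have hsn : s ≤ n := hs.2 (fun x hx => hx n hn)
      have : s < n := lt_of_le_of_ne hsn (fun h => hn.2 (h ▸ hsP))
      exact ⟨n, this, hnt'', hn.2⟩
    exact hnK ⟨s, hts, ⟨hsP, hK⟩, hPint⟩
end

section
/- Let (T, <) be a linear order and P, Q ⊆ T. Define (P Until* Q) to hold at t iff there exists t' > t and a partition of [t, t'] into two nonempty intervals I₁ < I₂ with P holding on all of I₁ and Q holding on all of I₂. If (T, <) is Dedekind complete, then (P Until* Q) holds at t if and only if P(t) and one of the following holds at t: (P Until Q), (Q Until Q), or P Until (P ∧ (Q Until Q)). -/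
/-- Order-convexity of a set. -/
def IsConvex {T : Type*} [LinearOrder T] (I : Set T) : Prop :=
  ∀ a ∈ I, ∀ b ∈ I, ∀ c, a ≤ c → c ≤ b → c ∈ I

/-- (P Until* Q) holds at t: some closed interval [t,t'] with t' > t splits into
nonempty convex pieces I₁ < I₂ with I₁ ⊆ P, I₂ ⊆ Q. -/
def UntilStar {T : Type*} [LinearOrder T] (P Q : Set T) (t : T) : Prop :=
  ∃ t', t < t' ∧ ∃ I₁ I₂ : Set T,
    I₁.Nonempty ∧ I₂.Nonempty ∧ IsConvex I₁ ∧ IsConvex I₂ ∧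
    I₁ ∪ I₂ = Set.Icc t t' ∧ Disjoint I₁ I₂ ∧
    (∀ a ∈ I₁, ∀ b ∈ I₂, a < b) ∧ I₁ ⊆ P ∧ I₂ ⊆ Q

theorem stmt_9 {T : Type*} [LinearOrder T]
    (hcomplete : ∀ S : Set T, S.Nonempty → (∃ b : T, ∀ x ∈ S, x ≤ b) →
      ∃ s : T, IsLUB S s)
    (P Q : Set T) (t : T) :
    UntilStar P Q t ↔
      t ∈ P ∧ (Until P Q t ∨ Until Q Q t ∨
        Until P (P ∩ {x | Until Q Q x}) t) := by
  constructor
  · rintro ⟨t', htt', I₁, I₂, hne1, hne2, hc1, hc2, hun, hdisj, hlt, hP, hQ⟩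
    have hsub1 : I₁ ⊆ Set.Icc t t' := hun ▸ Set.subset_union_left
    have hsub2 : I₂ ⊆ Set.Icc t t' := hun ▸ Set.subset_union_right
    have htmem : t ∈ I₁ ∪ I₂ := hun ▸ Set.left_mem_Icc.2 htt'.le
    have ht1 : t ∈ I₁ := by
      rcases htmem with h | h
      · exact h
      · obtain ⟨a, ha⟩ := hne1
        exact absurd (hlt a ha t h) (not_lt.2 (hsub1 ha).1)
    obtain ⟨s, hs⟩ := hcomplete I₁ hne1 ⟨t', fun x hx => (hsub1 hx).2⟩
    have hts : t ≤ s := hs.1 ht1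
    have hst' : s ≤ t' := hs.2 fun x hx => (hsub1 hx).2
    have hsmem : s ∈ I₁ ∪ I₂ := hun ▸ ⟨hts, hst'⟩
    refine ⟨hP ht1, ?_⟩
    rcases hsmem with hsI | hsI
    · -- s ∈ I₁ : Until Q Q at s, then split on t = s
      have ht'2 : t' ∈ I₂ := by
        have : t' ∈ I₁ ∪ I₂ := hun ▸ Set.right_mem_Icc.2 htt'.le
        rcases this with h | h
        · exfalso
          have hst'' : s = t' := le_antisymm hst' (hs.1 h)
          obtain ⟨b, hb⟩ := hne2
          exact absurd (hlt s hsI b hb) (not_lt.2 (hst'' ▸ (hsub2 hb).2))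
        · exact h
      have hst : s < t' := hlt s hsI t' ht'2
      have hUQQ : Until Q Q s := by
        refine ⟨t', hst, hQ ht'2, fun y hy1 hy2 => ?_⟩
        have hy : y ∈ I₁ ∪ I₂ := hun ▸ ⟨hts.trans hy1.le, hy2.le⟩
        rcases hy with h | h
        · exact absurd (hs.1 h) (not_le.2 hy1)
        · exact hQ h
      rcases eq_or_lt_of_le hts with heq | hlt'
      · exact Or.inr (Or.inl (heq ▸ hUQQ))
      · refine Or.inr (Or.inr ⟨s, hlt', ⟨hP hsI, hUQQ⟩, fun y hy1 hy2 => ?_⟩)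
        have hy : y ∈ I₁ ∪ I₂ := hun ▸ ⟨hy1.le, hy2.le.trans hst'⟩
        rcases hy with h | h
        · exact hP h
        · exact absurd (hs.2 fun x hx => (hlt x hx y h).le) (not_le.2 hy2)
    · -- s ∈ I₂ : Until P Q at t with witness s
      refine Or.inl ⟨s, hlt t ht1 s hsI, hQ hsI, fun y hy1 hy2 => ?_⟩
      have hy : y ∈ I₁ ∪ I₂ := hun ▸ ⟨hy1.le, hy2.le.trans hst'⟩
      rcases hy with h | h
      · exact hP h
      · exact absurd (hs.2 fun x hx => (hlt x hx y h).le) (not_le.2 hy2)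
  · rintro ⟨htP, hcase⟩
    rcases hcase with ⟨t', htt', ht'Q, hmid⟩ | ⟨t', htt', ht'Q, hmid⟩ |
        ⟨s, hts, ⟨hsP, t', hst', ht'Q, hmid2⟩, hmid⟩
    · -- Until P Q : I₁ = Ico t t', I₂ = {t'}
      refine ⟨t', htt', Set.Ico t t', {t'}, ⟨t, le_refl t, htt'⟩,
        ⟨t', rfl⟩, ?_, ?_, ?_, ?_, ?_, ?_, ?_⟩
      · intro a ha b hb c hac hcb
        exact ⟨ha.1.trans hac, lt_of_le_of_lt hcb hb.2⟩
      · intro a ha b hb c hac hcb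
        simp only [Set.mem_singleton_iff] at *
        exact le_antisymm (hcb.trans hb.le) (ha ▸ hac)
      · rw [Set.Ico_union_right htt'.le]
      · simp [Set.disjoint_singleton_right]
      · rintro a ha b rfl; exact ha.2
      · rintro a ⟨ha1, ha2⟩
        rcases eq_or_lt_of_le ha1 with rfl | h
        · exact htP
        · exact hmid a h ha2
      · rintro b rfl; exact ht'Q
    · -- Until Q Q : I₁ = {t}, I₂ = Ioc t t'
      refine ⟨t', htt', {t}, Set.Ioc t t', ⟨t, rfl⟩, ⟨t', htt', le_refl t'⟩,
        ?_, ?_, ?_, ?_, ?_, ?_, ?_⟩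
      · intro a ha b hb c hac hcb
        simp only [Set.mem_singleton_iff] at *
        exact le_antisymm (hcb.trans hb.le) (ha ▸ hac)
      · intro a ha b hb c hac hcb
        exact ⟨lt_of_lt_of_le ha.1 hac, hcb.trans hb.2⟩
      · rw [Set.singleton_union, Set.Ioc_insert_left htt'.le]
      · simp only [Set.disjoint_singleton_left, Set.mem_Ioc]
        exact fun h => lt_irrefl t h.1
      · rintro a rfl b hb; exact hb.1
      · rintro a rfl; exact htP
      · rintro b ⟨hb1, hb2⟩
        rcases eq_or_lt_of_le hb2 with rfl | h
        · exact ht'Q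
        · exact hmid b hb1 h
    · -- Until P (P ∩ UntilQQ) : I₁ = Icc t s, I₂ = Ioc s t'
      refine ⟨t', hts.trans hst', Set.Icc t s, Set.Ioc s t',
        ⟨t, le_refl t, hts.le⟩, ⟨t', hst', le_refl t'⟩, ?_, ?_, ?_, ?_, ?_, ?_, ?_⟩
      · intro a ha b hb c hac hcb
        exact ⟨ha.1.trans hac, hcb.trans hb.2⟩
      · intro a ha b hb c hac hcb
        exact ⟨lt_of_lt_of_le ha.1 hac, hcb.trans hb.2⟩
      · rw [Set.Icc_union_Ioc_eq_Icc hts.le hst'.le]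
      · rw [Set.disjoint_left]
        rintro a ⟨_, ha2⟩ ⟨hb1, _⟩
        exact absurd ha2 (not_le.2 hb1)
      · rintro a ⟨_, ha2⟩ b ⟨hb1, _⟩
        exact lt_of_le_of_lt ha2 hb1
      · rintro a ⟨ha1, ha2⟩
        rcases eq_or_lt_of_le ha1 with rfl | h
        · exact htP
        · rcases eq_or_lt_of_le ha2 with rfl | h2
          · exact hsP
          · exact hmid a h h2
      · rintro b ⟨hb1, hb2⟩
        rcases eq_or_lt_of_le hb2 with rfl | h
        · exact ht'Q
        · exact hmid2 b hb1 h
end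

section
/- Let (T, <) be a linear order and P, Q ⊆ T. If P(t) holds and (P Until Q) or (Q Until Q) or P Until (P ∧ (Q Until Q)) holds at t, then (P Until* Q) holds at t, i.e., there exists t' > t and nonempty order-convex sets I₁ < I₂ partitioning [t,t'] with I₁ ⊆ P and I₂ ⊆ Q. -/
theorem stmt_10 {T : Type*} [LinearOrder T] (P Q : Set T) (t : T)
    (ht : t ∈ P)
    (h : Until P Q t ∨ Until Q Q t ∨ Until P (P ∩ {x | Until Q Q x}) t) :
    UntilStar P Q t := by
  rcases h with ⟨t', htt', ht'Q, hmid⟩ | ⟨t', htt', ht'Q, hmid⟩ |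
    ⟨s, hts, ⟨hsP, t', hst', ht'Q, hmid2⟩, hmid⟩
  · -- I₁ = Ico t t', I₂ = {t'}
    refine ⟨t', htt', Set.Ico t t', {t'}, ⟨t, le_refl t, htt'⟩, ⟨t', rfl⟩,
      ?_, ?_, ?_, ?_, ?_, ?_, ?_⟩
    · intro a ha b hb c hac hcb
      exact ⟨le_trans ha.1 hac, lt_of_le_of_lt hcb hb.2⟩
    · intro a ha b hb c hac hcb
      simp only [Set.mem_singleton_iff] at *
      exact le_antisymm (hcb.trans hb.le) (ha ▸ hac)
    · ext x
      simp only [Set.mem_union, Set.mem_Ico, Set.mem_singleton_iff, Set.mem_Icc]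
      constructor
      · rintro (⟨h1, h2⟩ | rfl)
        · exact ⟨h1, h2.le⟩
        · exact ⟨htt'.le, le_refl _⟩
      · rintro ⟨h1, h2⟩
        rcases lt_or_eq_of_le h2 with h | h
        · exact Or.inl ⟨h1, h⟩
        · exact Or.inr h
    · rw [Set.disjoint_singleton_right]
      exact fun h => lt_irrefl _ h.2
    · rintro a ha b rfl; exact ha.2
    · rintro x ⟨h1, h2⟩
      rcases lt_or_eq_of_le h1 with h | h
      · exact hmid x h h2
      · exact h ▸ ht
    · rintro x rfl; exact ht'Q
  · -- I₁ = {t}, I₂ = Ioc t t'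
    refine ⟨t', htt', {t}, Set.Ioc t t', ⟨t, rfl⟩, ⟨t', htt', le_refl _⟩,
      ?_, ?_, ?_, ?_, ?_, ?_, ?_⟩
    · intro a ha b hb c hac hcb
      simp only [Set.mem_singleton_iff] at *
      exact le_antisymm (hcb.trans hb.le) (ha ▸ hac)
    · intro a ha b hb c hac hcb
      exact ⟨lt_of_lt_of_le ha.1 hac, le_trans hcb hb.2⟩
    · ext x
      simp only [Set.mem_union, Set.mem_Ioc, Set.mem_singleton_iff, Set.mem_Icc]
      constructor
      · rintro (rfl | ⟨h1, h2⟩)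
        · exact ⟨le_refl _, htt'.le⟩
        · exact ⟨h1.le, h2⟩
      · rintro ⟨h1, h2⟩
        rcases lt_or_eq_of_le h1 with h | h
        · exact Or.inr ⟨h, h2⟩
        · exact Or.inl h.symm
    · rw [Set.disjoint_singleton_left]
      exact fun h => lt_irrefl _ h.1
    · rintro a rfl b hb; exact hb.1
    · rintro x rfl; exact ht
    · rintro x ⟨h1, h2⟩
      rcases lt_or_eq_of_le h2 with h | h
      · exact hmid x h1 h
      · exact h ▸ ht'Q
  · -- I₁ = Icc t s, I₂ = Ioc s t'
    refine ⟨t', hts.trans hst', Set.Icc t s, Set.Ioc s t',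
      ⟨t, le_refl _, hts.le⟩, ⟨t', hst', le_refl _⟩, ?_, ?_, ?_, ?_, ?_, ?_, ?_⟩
    · intro a ha b hb c hac hcb
      exact ⟨le_trans ha.1 hac, le_trans hcb hb.2⟩
    · intro a ha b hb c hac hcb
      exact ⟨lt_of_lt_of_le ha.1 hac, le_trans hcb hb.2⟩
    · rw [Set.Icc_union_Ioc_eq_Icc (le_of_lt hts) (le_of_lt hst')]
    · rw [Set.disjoint_left]; rintro x ⟨_, h2⟩ ⟨h3, _⟩; exact absurd h2 (not_le.mpr h3)
    · rintro a ha b hb; exact lt_of_le_of_lt ha.2 hb.1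
    · rintro x ⟨h1, h2⟩
      rcases lt_or_eq_of_le h1 with h | h
      · rcases lt_or_eq_of_le h2 with h' | h'
        · exact hmid x h h'
        · exact h' ▸ hsP
      · exact h ▸ ht
    · rintro x ⟨h1, h2⟩
      rcases lt_or_eq_of_le h2 with h | h
      · exact hmid2 x h1 h
      · exact h ▸ ht'Q
end

section
/- Let (T,<) be a linear order, t ∈ T, P, Q ⊆ T, and suppose P(t) holds and there is a gap g with t ∈ g such that P holds on the nonempty interval (t,g) and Q holds on (g, t₁] for some t₁ ∉ g. Then (P Until* Q) holds at t: there exists t' > t and a partition of [t,t'] into nonempty order-convex I₁ < I₂ with I₁ ⊆ P, I₂ ⊆ Q. -/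
theorem stmt_11 {T : Type*} [LinearOrder T] (P Q : Set T) (t : T)
    (ht : t ∈ P) (g : Set T) (hg : IsGap g) (htg : t ∈ g)
    (hne : ∃ a, t < a ∧ a ∈ g)
    (hP : ∀ a, t < a → a ∈ g → a ∈ P)
    (hQ : ∃ t₁ ∉ g, ∀ a, a ∉ g → a ≤ t₁ → a ∈ Q) :
    UntilStar P Q t := by
  obtain ⟨t₁, ht₁, hQ⟩ := hQ
  obtain ⟨-, -, hdc, -, -⟩ := hg
  have htt₁ : t < t₁ := by
    by_contra h
    exact ht₁ (hdc t₁ t (le_of_not_gt h) htg)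
  refine ⟨t₁, htt₁, Set.Icc t t₁ ∩ g, Set.Icc t t₁ ∩ gᶜ, ⟨t, ⟨le_refl t, le_of_lt htt₁⟩, htg⟩,
    ⟨t₁, ⟨le_of_lt htt₁, le_refl t₁⟩, ht₁⟩, ?_, ?_, ?_, ?_, ?_, ?_, ?_⟩
  · rintro a ⟨⟨ha1, _⟩, _⟩ b ⟨⟨_, hb2⟩, hbg⟩ c hac hcb
    exact ⟨⟨le_trans ha1 hac, le_trans hcb hb2⟩, hdc c b hcb hbg⟩
  · rintro a ⟨⟨ha1, _⟩, hag⟩ b ⟨⟨_, hb2⟩, _⟩ c hac hcb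
    refine ⟨⟨le_trans ha1 hac, le_trans hcb hb2⟩, fun hc => hag (hdc a c hac hc)⟩
  · ext x
    simp only [Set.mem_union, Set.mem_inter_iff, Set.mem_compl_iff]
    constructor
    · rintro (⟨h, _⟩ | ⟨h, _⟩) <;> exact h
    · intro h; by_cases hx : x ∈ g
      · exact Or.inl ⟨h, hx⟩
      · exact Or.inr ⟨h, hx⟩
  · rw [Set.disjoint_left]
    rintro a ⟨_, hag⟩ ⟨_, hag'⟩
    exact hag' hag
  · rintro a ⟨_, hag⟩ b ⟨_, hbg⟩
    by_contra h
    exact hbg (hdc b a (le_of_not_gt h) hag)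
  · rintro a ⟨⟨ha1, _⟩, hag⟩
    rcases eq_or_lt_of_le ha1 with rfl | h
    · exact ht
    · exact hP a h hag
  · rintro a ⟨⟨_, ha2⟩, hag⟩
    exact hQ a hag ha2
end

section
/- Let (T,<) be a linear order, t₁ ∈ T, and δ₁,...,δₖ ⊆ T with an index set O ⊆ {1,...,k}. Suppose for each i ∈ {1,...,k} the set Fᵢ ⊆ T is defined by: Fₖ = δₖ, and for 2 ≤ i ≤ k, F_{i-1} = δ_{i-1} ∩ G where G is: {t | ∃ t' the successor of t with t' ∈ Fᵢ} if both i-1 ∈ O and i ∈ O; {t | (δᵢ Until Fᵢ) at t} if i-1 ∈ O, i ∉ O; {t | (δ_{i-1} Until Fᵢ) at t} if i-1 ∉ O, i ∈ O; {t | (δ_{i-1} Until* Fᵢ) at t} if i-1 ∉ O and i ∉ O. Then: if there is t ≥ t₁ and a partition of [t₁,t] into nonempty consecutive order-convex intervals I₁ < I₂ < ... < Iₖ such that Iⱼ ⊆ δⱼ for all j and Iⱼ is a singleton for each j ∈ O, then t₁ ∈ F₁. -/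
/-- A partition of [a,b] into consecutive nonempty convex intervals I 0 < I 1 < … -/
def IsDecomp {T : Type*} [LinearOrder T] (a b : T) {k : ℕ} (I : Fin k → Set T) : Prop :=
  (∀ j, (I j).Nonempty) ∧ (∀ j, IsConvex (I j)) ∧
    (∀ i j : Fin k, i < j → ∀ x ∈ I i, ∀ y ∈ I j, x < y) ∧
    (⋃ j, I j) = Set.Icc a b

/-- The defining equations of the formulas F₁,…,F_{k} from δ₁,…,δ_k and O
 (here k = n+1, indices are 0-based). `Until ∅` expresses `False Until`,
 i.e. "the successor of t exists and lies in …". -/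
def DefinesF {T : Type*} [LinearOrder T] {n : ℕ} (δ F : Fin (n + 1) → Set T)
    (O : Finset (Fin (n + 1))) : Prop :=
  F (Fin.last n) = δ (Fin.last n) ∧
    ∀ i : Fin n,
      F i.castSucc = δ i.castSucc ∩ {t |
        if i.castSucc ∈ O then
          (if i.succ ∈ O then Until (∅ : Set T) (F i.succ) t
           else Until (δ i.succ) (F i.succ) t)
        else
          (if i.succ ∈ O then Until (δ i.castSucc) (F i.succ) t
           else UntilStar (δ i.castSucc) (F i.succ) t)}

/-!
Every piece `I i` lies in `F i`, by downward induction on `i`. For `x ∈ I i` and any `s ∈ I (i+1)`,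
the interval `[x, s]` is covered by `I i ∪ I (i+1)`; a piece indexed in `O` is a singleton, so it
contributes no point strictly after `x` (resp. before `s`), which is why the weaker "until"
conditions suffice there. In the `Until*` case, `[x, s] ∩ I i` and `[x, s] ∩ I (i+1)` form the
required partition. Finally `t₁ ∈ I 0`.
-/

open Set

section

variable {T : Type*} [LinearOrder T]

theorem isConvex_iff_ordConnected {A : Set T} : IsConvex A ↔ A.OrdConnected :=
  ⟨fun h => ⟨fun a ha b hb _ hc => h a ha b hb _ hc.1 hc.2⟩,
    fun h _ ha _ hb _ hac hcb => h.out ha hb ⟨hac, hcb⟩⟩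

theorem IsConvex.Icc_inter {A : Set T} (hA : IsConvex A) (x s : T) : IsConvex (Icc x s ∩ A) :=
  isConvex_iff_ordConnected.2 <| ordConnected_Icc.inter (isConvex_iff_ordConnected.1 hA)

theorem until_of_Icc_subset_union {A B P Q : Set T} {x s : T}
    (hgap : Icc x s ⊆ A ∪ B) (hxs : x < s) (hsQ : s ∈ Q)
    (hAP : ∀ y ∈ A, x < y → y ∈ P) (hBP : ∀ y ∈ B, y < s → y ∈ P) : Until P Q x := by
  refine ⟨s, hxs, hsQ, fun y hxy hys => ?_⟩
  rcases hgap ⟨hxy.le, hys.le⟩ with hy | hy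
  exacts [hAP y hy hxy, hBP y hy hys]

theorem untilStar_of_Icc_subset_union {A B P Q : Set T} {x s : T}
    (hlt : ∀ a ∈ A, ∀ b ∈ B, a < b) (hgap : Icc x s ⊆ A ∪ B)
    (hA : IsConvex A) (hB : IsConvex B) (hx : x ∈ A) (hs : s ∈ B)
    (hAP : A ⊆ P) (hBQ : B ⊆ Q) : UntilStar P Q x := by
  have hxs := hlt x hx s hs
  refine ⟨s, hxs, Icc x s ∩ A, Icc x s ∩ B, ⟨x, ⟨le_rfl, hxs.le⟩, hx⟩,
    ⟨s, ⟨hxs.le, le_rfl⟩, hs⟩, hA.Icc_inter x s, hB.Icc_inter x s, ?_, ?_,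
    fun a ha b hb => hlt a ha.2 b hb.2, fun a ha => hAP ha.2, fun b hb => hBQ hb.2⟩
  · rw [← inter_union_distrib_left, inter_eq_left.2 hgap]
  · exact disjoint_left.2 fun a ha ha' => (hlt a ha.2 a ha'.2).false

namespace IsDecomp

variable {a b : T}

theorem subset_Icc {k : ℕ} {I : Fin k → Set T} (hI : IsDecomp a b I) (j : Fin k) :
    I j ⊆ Icc a b :=
  hI.2.2.2 ▸ subset_iUnion I j

theorem exists_mem {k : ℕ} {I : Fin k → Set T} (hI : IsDecomp a b I) {y : T}
    (hy : y ∈ Icc a b) : ∃ j, y ∈ I j :=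
  mem_iUnion.1 (hI.2.2.2 ▸ hy)

theorem Icc_subset_union {n : ℕ} {I : Fin (n + 1) → Set T} (hI : IsDecomp a b I) (i : Fin n)
    {x s : T} (hx : x ∈ I i.castSucc) (hs : s ∈ I i.succ) :
    Icc x s ⊆ I i.castSucc ∪ I i.succ := by
  intro y hy
  obtain ⟨j, hj⟩ := hI.exists_mem ⟨(hI.subset_Icc _ hx).1.trans hy.1, hy.2.trans (hI.subset_Icc _ hs).2⟩
  rcases lt_or_ge j i.castSucc with hji | hij
  · exact absurd hy.1 (hI.2.2.1 _ _ hji y hj x hx).not_ge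
  rcases lt_or_ge i.succ j with hij' | hji'
  · exact absurd hy.2 (hI.2.2.1 _ _ hij' s hs y hj).not_ge
  have : j = i.castSucc ∨ j = i.succ := by
    simp only [Fin.ext_iff, Fin.le_iff_val_le_val, Fin.val_castSucc, Fin.val_succ] at hij hji' ⊢
    omega
  rcases this with rfl | rfl
  exacts [Or.inl hj, Or.inr hj]

theorem left_mem_zero {n : ℕ} {I : Fin (n + 1) → Set T} (hI : IsDecomp a b I) (hab : a ≤ b) :
    a ∈ I 0 := by
  obtain ⟨j, hj⟩ := hI.exists_mem ⟨le_rfl, hab⟩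
  obtain ⟨x, hx⟩ := hI.1 0
  rcases (Fin.zero_le j).eq_or_lt with rfl | hj0
  · exact hj
  · exact absurd (hI.subset_Icc 0 hx).1 (hI.2.2.1 0 j hj0 x hx a hj).not_ge

theorem subset_of_definesF {n : ℕ} {δ F I : Fin (n + 1) → Set T} {O : Finset (Fin (n + 1))}
    (hF : DefinesF δ F O) (hI : IsDecomp a b I) (hδ : ∀ j, I j ⊆ δ j)
    (hO : ∀ j ∈ O, ∃ x, I j = {x}) (i : Fin (n + 1)) : I i ⊆ F i := by
  induction i using Fin.reverseInduction with
  | last => exact hF.1 ▸ hδ _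
  | cast i ih =>
    have hsub : ∀ j ∈ O, (I j).Subsingleton := fun j hj => by
      obtain ⟨c, hc⟩ := hO j hj
      exact hc ▸ subsingleton_singleton
    obtain ⟨s, hs⟩ := hI.1 i.succ
    intro x hx
    have hlt := hI.2.2.1 _ _ i.castSucc_lt_succ
    have hgap := hI.Icc_subset_union i hx hs
    have hxs := hlt x hx s hs
    have hAP : ∀ P : Set T, i.castSucc ∈ O → ∀ y ∈ I i.castSucc, x < y → y ∈ P :=
      fun _ hc y hy hxy => absurd (hsub _ hc hx hy) hxy.ne
    have hBP : ∀ P : Set T, i.succ ∈ O → ∀ y ∈ I i.succ, y < s → y ∈ P :=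
      fun _ hc y hy hys => absurd (hsub _ hc hy hs) hys.ne
    rw [hF.2 i]
    refine ⟨hδ _ hx, ?_⟩
    split_ifs with hc hc' hc'
    · exact until_of_Icc_subset_union hgap hxs (ih hs) (hAP _ hc) (hBP _ hc')
    · exact until_of_Icc_subset_union hgap hxs (ih hs) (hAP _ hc) fun y hy _ => hδ _ hy
    · exact until_of_Icc_subset_union hgap hxs (ih hs) (fun y hy _ => hδ _ hy) (hBP _ hc')
    · exact untilStar_of_Icc_subset_union hlt hgap (hI.2.1 _) (hI.2.1 _) hx hs (hδ _) ih

end IsDecomp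

end

theorem stmt_13 {T : Type*} [LinearOrder T] {n : ℕ}
    (δ F : Fin (n + 1) → Set T) (O : Finset (Fin (n + 1)))
    (hF : DefinesF δ F O) (t₁ : T)
    (h : ∃ t, t₁ ≤ t ∧ ∃ I : Fin (n + 1) → Set T,
      IsDecomp t₁ t I ∧ (∀ j, I j ⊆ δ j) ∧ (∀ j ∈ O, ∃ x, I j = {x})) :
    t₁ ∈ F 0 := by
  obtain ⟨t, ht, I, hI, hδ, hO⟩ := h
  exact hI.subset_of_definesF hF hδ hO 0 (hI.left_mem_zero ht)
end
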